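/- arXiv:0908.0898 — 2 statements merged into one kernel-verified Lean document; each statement's English description precedes it below -/
import Mathlib

section
/- Let X be a Poisson random variable with parameter λ > 0, and let x be a natural number with x > λ. Then P(X ≥ x) = ∑_{k=x}^∞ e^{−λ} λ^k / k! ≤ e^{−λ} (e λ)^x / x^x. -/
open Real MeasureTheory Nat

/-! Chernoff's method: for `k ≥ x` and `λ ≤ t` one has `λ^k ≤ (λ/t)^x t^k`, so the Poisson tail
is dominated by `e^{-λ} (λ/t)^x ∑ t^k/k! = e^{-λ} (λ/t)^x e^t`; the choice `t = x` gives the bound. -/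

lemma measureReal_preimage_eq_tsum_indicator {Ω β : Type*} [MeasurableSpace Ω] [Countable β]
    [MeasurableSpace β] [MeasurableSingletonClass β] (μ : Measure Ω) [IsFiniteMeasure μ]
    {X : Ω → β} (hX : Measurable X) (s : Set β) :
    μ.real (X ⁻¹' s) = ∑' b, s.indicator (fun b ↦ μ.real (X ⁻¹' {b})) b := by
  rw [measureReal_def, ← tsum_measure_preimage_singleton s.to_countable
      (fun b _ ↦ hX (measurableSet_singleton b)),
    ENNReal.tsum_toReal_eq (fun _ ↦ measure_ne_top _ _)]
  exact tsum_subtype s (fun b ↦ μ.real (X ⁻¹' {b}))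

lemma pow_le_div_pow_mul_pow {a t : ℝ} (ha : 0 ≤ a) (ht : 0 < t) (hat : a ≤ t) {n k : ℕ}
    (hnk : n ≤ k) : a ^ k ≤ (a / t) ^ n * t ^ k := by
  obtain ⟨m, rfl⟩ := Nat.exists_eq_add_of_le hnk
  calc a ^ (n + m) = a ^ n * a ^ m := pow_add a n m
    _ ≤ a ^ n * t ^ m := by gcongr
    _ = (a / t) ^ n * t ^ (n + m) := by rw [div_pow, pow_add]; field_simp

lemma tsum_ite_pow_div_factorial_le {a t : ℝ} (ha : 0 ≤ a) (ht : 0 < t) (hat : a ≤ t) (n : ℕ) :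
    ∑' k, (if n ≤ k then a ^ k / k ! else 0) ≤ (a / t) ^ n * exp t := by
  have hexp : HasSum (fun k ↦ (a / t) ^ n * (t ^ k / k !)) ((a / t) ^ n * exp t) := by
    rw [exp_eq_exp_ℝ]
    exact (NormedSpace.expSeries_div_hasSum_exp t).mul_left _
  have hle : ∀ k, (if n ≤ k then a ^ k / k ! else 0) ≤ (a / t) ^ n * (t ^ k / k !) := by
    intro k
    split_ifs with hnk
    · rw [← mul_div_assoc]
      gcongr
      exact pow_le_div_pow_mul_pow ha ht hat hnk
    · positivity
  have hnonneg : ∀ k, 0 ≤ (if n ≤ k then a ^ k / k ! else 0) := fun k ↦ by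
    split_ifs <;> positivity
  exact hexp.tsum_eq ▸
    (Summable.of_nonneg_of_le hnonneg hle hexp.summable).tsum_le_tsum hle hexp.summable

/-- Chernoff bound for a Poisson random variable `X` of parameter `λ > 0`:
for a natural number `x > λ`,
`P(X ≥ x) = ∑_{k=x}^∞ e^{−λ} λ^k / k! ≤ e^{−λ} (e λ)^x / x^x`. -/
theorem stmt_3 {Ω : Type*} [MeasurableSpace Ω] (μ : Measure Ω) [IsProbabilityMeasure μ]
    (X : Ω → ℕ) (hX : Measurable X) (lam : ℝ) (hlam : 0 < lam)
    (hpmf : ∀ k : ℕ, (μ (X ⁻¹' {k})).toReal = Real.exp (-lam) * lam ^ k / (Nat.factorial k))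
    (x : ℕ) (hx : lam < x) :
    (μ {ω | x ≤ X ω}).toReal
        = ∑' k : ℕ, (if x ≤ k then Real.exp (-lam) * lam ^ k / (Nat.factorial k) else 0) ∧
    (μ {ω | x ≤ X ω}).toReal ≤ Real.exp (-lam) * (Real.exp 1 * lam) ^ x / (x : ℝ) ^ x := by
  have htail : (μ {ω | x ≤ X ω}).toReal
      = ∑' k : ℕ, (if x ≤ k then Real.exp (-lam) * lam ^ k / (Nat.factorial k) else 0) := by
    simp_rw [← hpmf]
    simpa [Set.indicator_apply, measureReal_def] using measureReal_preimage_eq_tsum_indicator μ hX {k | x ≤ k}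
  refine ⟨htail, ?_⟩
  have hxpos : (0 : ℝ) < x := hlam.trans hx
  calc (μ {ω | x ≤ X ω}).toReal
      = exp (-lam) * ∑' k : ℕ, (if x ≤ k then lam ^ k / k ! else 0) := by
        simp_rw [htail, mul_div_assoc, ← mul_ite_zero, tsum_mul_left]
    _ ≤ exp (-lam) * ((lam / x) ^ x * exp x) := by
        gcongr
        exact tsum_ite_pow_div_factorial_le hlam.le hxpos hx.le x
    _ = exp (-lam) * (exp 1 * lam) ^ x / (x : ℝ) ^ x := by
        rw [mul_pow, ← exp_one_pow, div_pow]
        field_simp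
end

section
/- Fix P, N₀, c, f_t > 0, α > 2, and f_e > √2. For a positive integer d define SNR_TR(d) := P (d+1)^{−α} c^{−α} 2^{−α/2} / (N₀ + 8P (f_t d c)^{−α} S(α)), SNR_e(d) := P (f_e d c)^{−α} / N₀, and R(d) := (1/(f_t d)²)(log₂(1 + SNR_TR(d)) − log₂(1 + SNR_e(d))). Then lim_{d→∞} d^{2+α} R(d) = P c^{−α} (2^{−α/2} − f_e^{−α}) / (f_t² N₀ ln 2), and this limit is strictly positive. In particular, with d = d(n) = κ'' log n, R(d(n)) = Ω((log n)^{−2−α}). -/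
open Real Filter

/-- `S(α) = ∑_{i=1}^∞ i · (i − 1/2)^{−α}`, the normalized interference sum. -/
noncomputable def Sval (α : ℝ) : ℝ := ∑' i : ℕ+, (i : ℝ) * ((i : ℝ) - 1 / 2) ^ (-α)

/-- Lower bound on the legitimate receiver's SINR for hop length `d`. -/
noncomputable def SNRtr (P N₀ c ft α : ℝ) (d : ℝ) : ℝ :=
  P * (d + 1) ^ (-α) * c ^ (-α) * (2 : ℝ) ^ (-α / 2) /
    (N₀ + 8 * P * (ft * d * c) ^ (-α) * Sval α)

/-- Upper bound on the eavesdropper's SNR for hop length `d`. -/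
noncomputable def SNRe (P N₀ c fe α : ℝ) (d : ℝ) : ℝ := P * (fe * d * c) ^ (-α) / N₀

/-- Per-hop secure rate for hop length `d`. -/
noncomputable def Rrate (P N₀ c ft fe α : ℝ) (d : ℝ) : ℝ :=
  (1 / (ft * d) ^ 2) *
    (Real.logb 2 (1 + SNRtr P N₀ c ft α d) - Real.logb 2 (1 + SNRe P N₀ c fe α d))

/-!
Since `log (1 + x) ~ x` as `x → 0`, it suffices to know `d ^ α · SNR(d)` for both links.
For the legitimate link the interference term of the denominator vanishes and `(d + 1) / d → 1`,
so `d ^ α · SNR_TR(d) → P c^{−α} 2^{−α/2} / N₀`; for the eavesdropper `d ^ α · SNR_e(d)` is the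
constant `P (f_e c)^{−α} / N₀`. The limit is positive because `f_e > √2` gives
`f_e^{−α} < 2^{−α/2}`, and once `d ^ {2+α} R(d)` exceeds half its limit, substituting
`d = κ'' log n` gives the lower bound on `R`.
-/

open Topology

theorem Filter.Tendsto.mul_log_one_add {ι : Type*} {l : Filter ι} {f g : ι → ℝ} {a : ℝ}
    (hf : Tendsto f l (𝓝 0)) (hgf : Tendsto (fun i => g i * f i) l (𝓝 a)) :
    Tendsto (fun i => g i * Real.log (1 + f i)) l (𝓝 a) := by
  set φ : ℝ → ℝ := fun y => Real.log (1 + y)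
  have hφ : HasDerivAt φ 1 0 := by
    simpa using ((hasDerivAt_id (0 : ℝ)).const_add 1).log (by norm_num)
  have hslope : Tendsto (fun i => dslope φ 0 (f i)) l (𝓝 1) := by
    have := (continuousAt_dslope_same.2 hφ.differentiableAt).tendsto.comp hf
    rwa [dslope_same, hφ.deriv] at this
  -- the factorization also holds where `f i = 0`, so no nonvanishing hypothesis is needed
  have hfactor (y : ℝ) : Real.log (1 + y) = y * dslope φ 0 y := by
    simpa [φ] using (sub_smul_dslope φ 0 y).symm
  simpa only [hfactor, mul_assoc, mul_one] using hgf.mul hslope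

theorem tendsto_zero_of_tendsto_rpow_mul {f : ℝ → ℝ} {α a : ℝ} (hα : 0 < α)
    (h : Tendsto (fun d => d ^ α * f d) atTop (𝓝 a)) : Tendsto f atTop (𝓝 0) := by
  have := (tendsto_rpow_neg_atTop hα).mul h
  rw [zero_mul] at this
  refine this.congr' ?_
  filter_upwards [eventually_gt_atTop 0] with d hd
  rw [← mul_assoc, ← Real.rpow_add hd, neg_add_cancel, Real.rpow_zero, one_mul]

theorem tendsto_rpow_mul_log_one_add {f : ℝ → ℝ} {α a : ℝ} (hα : 0 < α)
    (h : Tendsto (fun d => d ^ α * f d) atTop (𝓝 a)) :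
    Tendsto (fun d => d ^ α * Real.log (1 + f d)) atTop (𝓝 a) :=
  (tendsto_zero_of_tendsto_rpow_mul hα h).mul_log_one_add h

theorem tendsto_rpow_mul_SNRtr (P : ℝ) {N₀ c ft α : ℝ} (hN₀ : 0 < N₀) (hc : 0 < c)
    (hft : 0 < ft) (hα : 0 < α) :
    Tendsto (fun d => d ^ α * SNRtr P N₀ c ft α d) atTop
      (𝓝 (P * c ^ (-α) * (2 : ℝ) ^ (-α / 2) / N₀)) := by
  have hratio : Tendsto (fun d : ℝ => (1 + d⁻¹) ^ (-α)) atTop (𝓝 1) := by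
    have hbase : Tendsto (fun d : ℝ => 1 + d⁻¹) atTop (𝓝 1) := by
      simpa using tendsto_inv_atTop_zero.const_add (1 : ℝ)
    simpa using hbase.rpow_const (Or.inl one_ne_zero) (p := -α)
  have hden : Tendsto (fun d => N₀ + 8 * P * (ft * d * c) ^ (-α) * Sval α) atTop (𝓝 N₀) := by
    have hdist : Tendsto (fun d : ℝ => ft * d * c) atTop atTop :=
      (tendsto_id.const_mul_atTop hft).atTop_mul_const hc
    simpa using ((((tendsto_rpow_neg_atTop hα).comp hdist).const_mul (8 * P)).mul_const
      (Sval α)).const_add N₀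
  have := (hratio.const_mul (P * c ^ (-α) * (2 : ℝ) ^ (-α / 2))).div hden hN₀.ne'
  rw [mul_one] at this
  refine this.congr' ?_
  filter_upwards [eventually_gt_atTop 0] with d hd
  have hsplit : (1 + d⁻¹) ^ (-α) = d ^ α * (d + 1) ^ (-α) := by
    rw [show 1 + d⁻¹ = (d + 1) / d by field_simp, Real.div_rpow (by positivity) hd.le,
      Real.rpow_neg hd.le, div_inv_eq_mul, mul_comm]
  rw [Pi.div_apply, SNRtr, hsplit]
  ring

theorem rpow_mul_SNRe (P N₀ : ℝ) {c fe α d : ℝ} (hc : 0 ≤ c) (hfe : 0 ≤ fe) (hd : 0 < d) :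
    d ^ α * SNRe P N₀ c fe α d = P * fe ^ (-α) * c ^ (-α) / N₀ := by
  rw [SNRe, Real.mul_rpow (by positivity) hc, Real.mul_rpow hfe hd.le, Real.rpow_neg hd.le]
  field_simp

theorem rpow_two_add_mul_Rrate (P N₀ c fe α : ℝ) {ft d : ℝ} (hft : ft ≠ 0) (hd : 0 < d) :
    d ^ (2 + α) * Rrate P N₀ c ft fe α d =
      (d ^ α * Real.log (1 + SNRtr P N₀ c ft α d) - d ^ α * Real.log (1 + SNRe P N₀ c fe α d)) /
        (ft ^ 2 * Real.log 2) := by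
  rw [Rrate, Real.logb, Real.logb, Real.rpow_add hd, Real.rpow_two]
  field_simp

theorem tendsto_rpow_two_add_mul_Rrate (P : ℝ) {N₀ c ft fe α : ℝ} (hN₀ : 0 < N₀) (hc : 0 < c)
    (hft : 0 < ft) (hfe : 0 ≤ fe) (hα : 0 < α) :
    Tendsto (fun d : ℝ => d ^ (2 + α) * Rrate P N₀ c ft fe α d) atTop
      (𝓝 (P * c ^ (-α) * ((2 : ℝ) ^ (-α / 2) - fe ^ (-α)) / (ft ^ 2 * N₀ * Real.log 2))) := by
  have hSNRe : Tendsto (fun d => d ^ α * SNRe P N₀ c fe α d) atTop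
      (𝓝 (P * fe ^ (-α) * c ^ (-α) / N₀)) :=
    tendsto_const_nhds.congr' <| (eventually_gt_atTop 0).mono fun d hd =>
      (rpow_mul_SNRe P N₀ hc.le hfe hd).symm
  have := ((tendsto_rpow_mul_log_one_add hα (tendsto_rpow_mul_SNRtr P hN₀ hc hft hα)).sub
    (tendsto_rpow_mul_log_one_add hα hSNRe)).div_const (ft ^ 2 * Real.log 2)
  have hval : (P * c ^ (-α) * (2 : ℝ) ^ (-α / 2) / N₀ - P * fe ^ (-α) * c ^ (-α) / N₀) /
      (ft ^ 2 * Real.log 2) =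
      P * c ^ (-α) * ((2 : ℝ) ^ (-α / 2) - fe ^ (-α)) / (ft ^ 2 * N₀ * Real.log 2) := by
    field_simp
  rw [hval] at this
  refine this.congr' ?_
  filter_upwards [eventually_gt_atTop 0] with d hd
  exact (rpow_two_add_mul_Rrate P N₀ c fe α hft.ne' hd).symm

theorem rpow_neg_lt_two_rpow_neg_half {fe α : ℝ} (hfe : Real.sqrt 2 < fe) (hα : 0 < α) :
    fe ^ (-α) < (2 : ℝ) ^ (-α / 2) := by
  have hsqrt : Real.sqrt 2 ^ (-α) = (2 : ℝ) ^ (-α / 2) := by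
    rw [Real.sqrt_eq_rpow, ← Real.rpow_mul zero_le_two]
    ring_nf
  exact hsqrt ▸ Real.rpow_lt_rpow_of_neg (by positivity) hfe (neg_lt_zero.2 hα)

theorem eventually_mul_rpow_neg_le_of_tendsto {ι : Type*} {l : Filter ι} {R : ℝ → ℝ}
    {s L κ : ℝ} (hL : 0 < L) (hR : Tendsto (fun d => d ^ s * R d) atTop (𝓝 L)) (hκ : 0 < κ)
    {u : ι → ℝ} (hu : Tendsto u l atTop) :
    ∀ᶠ i in l, L / 2 * κ ^ (-s) * u i ^ (-s) ≤ R (κ * u i) := by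
  have hlarge : ∀ᶠ d in atTop, L / 2 ≤ d ^ s * R d ∧ 0 < d :=
    (hR.eventually (eventually_ge_nhds (half_lt_self hL))).and (eventually_gt_atTop 0)
  filter_upwards [(hu.const_mul_atTop hκ).eventually hlarge, hu.eventually_gt_atTop 0]
    with i ⟨hle, hd⟩ hu0
  rw [mul_assoc, ← Real.mul_rpow hκ.le hu0.le, Real.rpow_neg hd.le, ← div_eq_mul_inv,
    div_le_iff₀ (by positivity)]
  linarith

/-- `d^{2+α} R(d) → P c^{−α} (2^{−α/2} − f_e^{−α}) / (f_t² N₀ ln 2) > 0` as `d → ∞`;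
in particular, with `d = κ'' log n`, the rate satisfies `R(d(n)) = Ω((log n)^{−2−α})`. -/
theorem stmt_8 (P N₀ c ft : ℝ) (hP : 0 < P) (hN₀ : 0 < N₀) (hc : 0 < c) (hft : 0 < ft)
    (α : ℝ) (hα : 2 < α) (fe : ℝ) (hfe : Real.sqrt 2 < fe) :
    Tendsto (fun d : ℝ => d ^ (2 + α) * Rrate P N₀ c ft fe α d) atTop
      (nhds (P * c ^ (-α) * ((2 : ℝ) ^ (-α / 2) - fe ^ (-α)) / (ft ^ 2 * N₀ * Real.log 2))) ∧
    0 < P * c ^ (-α) * ((2 : ℝ) ^ (-α / 2) - fe ^ (-α)) / (ft ^ 2 * N₀ * Real.log 2) ∧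
    ∀ κ'' : ℝ, 0 < κ'' → ∃ k : ℝ, 0 < k ∧
      ∀ᶠ n : ℕ in atTop,
        k * (Real.log n) ^ (-(2 + α)) ≤ Rrate P N₀ c ft fe α (κ'' * Real.log n) := by
  have hα0 : 0 < α := by linarith
  have hlim := tendsto_rpow_two_add_mul_Rrate P hN₀ hc hft
    ((Real.sqrt_nonneg 2).trans hfe.le) hα0
  have hgap := sub_pos.2 (rpow_neg_lt_two_rpow_neg_half hfe hα0)
  have hpos : 0 < P * c ^ (-α) * ((2 : ℝ) ^ (-α / 2) - fe ^ (-α)) /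
      (ft ^ 2 * N₀ * Real.log 2) := by
    have := Real.log_pos one_lt_two
    positivity
  refine ⟨hlim, hpos, fun κ hκ => ⟨_, ?_, eventually_mul_rpow_neg_le_of_tendsto hpos hlim hκ
    (Real.tendsto_log_atTop.comp tendsto_natCast_atTop_atTop)⟩⟩
  positivity
end
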